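/- arXiv:1108.0327 — 5 statements merged into one kernel-verified Lean document; each statement's English description precedes it below -/
import Mathlib

section
/- Let f, f', h : ℕ → (0,∞) be monotone unbounded functions and suppose there is a constant c > 0 such that (1/c) f'(μ) ≤ f(μ) ≤ c f'(μ) for all μ ∈ ℕ. Then for the same constant c, (1/c) (f'*h)(μ) ≤ (f*h)(μ) ≤ c (f'*h)(μ) for all μ ∈ ℕ, where * denotes the monotone merge of two sequences. -/
/-! If the values of `m` are dominated termwise by `φ` of the values of `m'`, then at least
`μ + 1` values of `m` lie below `φ (m' μ)`, namely those matching `m' 0, …, m' μ`; since `m`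
enumerates its values monotonically, `m μ` is one of them. Merging with the same `h` preserves
domination by `x ↦ c * x` once `c ≥ 1`, and `c ≥ 1` is forced by `f' ≤ c f ≤ c² f'` with
`f' > 0`. -/

/-- `m` is the monotone merge of `f` and `h`: a monotone enumeration of the
combined multiset of values of `f` and `h` (so `m i` is the `i`-th smallest
element of that multiset). -/
def IsMerge (f h m : ℕ → ℝ) : Prop :=
  Monotone m ∧ ∃ e : ℕ ⊕ ℕ ≃ ℕ, ∀ i, m (e i) = Sum.elim f h i

theorem Monotone.le_comp_of_enum_le {ι α β : Type*} [LinearOrder α] [Preorder β]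
    {g : ι → α} {g' : ι → β} {m : ℕ → α} {m' : ℕ → β} {φ : β → α}
    (hm : Monotone m) (hm' : Monotone m') (hφ : Monotone φ)
    (e e' : ι ≃ ℕ) (he : ∀ i, m (e i) = g i) (he' : ∀ i, m' (e' i) = g' i)
    (hle : ∀ i, g i ≤ φ (g' i)) (μ : ℕ) : m μ ≤ φ (m' μ) := by
  by_contra! hlt
  have hbelow (k : Fin (μ + 1)) : e (e'.symm k) < μ := by
    by_contra! hμ
    have : m (e (e'.symm k)) ≤ φ (m' μ) :=
      calc m (e (e'.symm k)) = g (e'.symm k) := he _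
        _ ≤ φ (g' (e'.symm k)) := hle _
        _ = φ (m' k) := by rw [← he', e'.apply_symm_apply]
        _ ≤ φ (m' μ) := hφ (hm' (Fin.is_le k))
    exact (hlt.trans_le (hm hμ)).not_ge this
  have hinj : Function.Injective fun k : Fin (μ + 1) => (⟨_, hbelow k⟩ : Fin μ) := by
    intro k l hkl
    simpa [Fin.ext_iff] using hkl
  simpa using Fintype.card_le_of_injective _ hinj

theorem IsMerge.le_comp {f h f' h' m m' : ℕ → ℝ} (hm : IsMerge f h m) (hm' : IsMerge f' h' m')
    {φ : ℝ → ℝ} (hφ : Monotone φ) (hf : ∀ i, f i ≤ φ (f' i)) (hh : ∀ i, h i ≤ φ (h' i)) (μ : ℕ) :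
    m μ ≤ φ (m' μ) := by
  obtain ⟨hm, e, he⟩ := hm
  obtain ⟨hm', e', he'⟩ := hm'
  exact hm.le_comp_of_enum_le hm' hφ e e' he he' (Sum.forall.mpr ⟨hf, hh⟩) μ

theorem one_le_of_inv_mul_le_of_le_mul {a b c : ℝ} (ha : 0 < a) (hc : 0 < c)
    (hab : (1 / c) * a ≤ b) (hba : b ≤ c * a) : 1 ≤ c := by
  have : a ≤ c * c * a := by
    calc a ≤ c * b := by rwa [one_div, inv_mul_le_iff₀ hc] at hab
      _ ≤ c * (c * a) := by gcongr
      _ = c * c * a := by ring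
  nlinarith [(le_mul_iff_one_le_left ha).mp this]

theorem stmt_2_general (f f' h : ℕ → ℝ)
    (hf'pos : ∀ μ, 0 < f' μ)
    (hhpos : ∀ μ, 0 < h μ)
    (c : ℝ) (hc : 0 < c)
    (hequiv : ∀ μ, (1 / c) * f' μ ≤ f μ ∧ f μ ≤ c * f' μ)
    (m m' : ℕ → ℝ) (hm : IsMerge f h m) (hm' : IsMerge f' h m') :
    ∀ μ, (1 / c) * m' μ ≤ m μ ∧ m μ ≤ c * m' μ := by
  have hc1 : 1 ≤ c := one_le_of_inv_mul_le_of_le_mul (hf'pos 0) hc (hequiv 0).1 (hequiv 0).2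
  have hmul : Monotone (c * ·) := fun _ _ hxy => mul_le_mul_of_nonneg_left hxy hc.le
  have hh (i : ℕ) : h i ≤ c * h i := le_mul_of_one_le_left (hhpos i).le hc1
  have hf' (i : ℕ) : f' i ≤ c * f i := by
    simpa only [one_div, inv_mul_le_iff₀ hc] using (hequiv i).1
  intro μ
  refine ⟨?_, hm.le_comp hm' hmul (fun i => (hequiv i).2) hh μ⟩
  rw [one_div, inv_mul_le_iff₀ hc]
  exact hm'.le_comp hm hmul hf' hh μ

/-- Lemma 3.6 of the paper: if `(1/c) f' ≤ f ≤ c f'` pointwise,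
then `(1/c) (f'*h) ≤ f*h ≤ c (f'*h)` pointwise, for the same constant `c`. -/
theorem stmt_2 (f f' h : ℕ → ℝ)
    (hfpos : ∀ μ, 0 < f μ) (hfmono : Monotone f) (hfunbdd : ¬ BddAbove (Set.range f))
    (hf'pos : ∀ μ, 0 < f' μ) (hf'mono : Monotone f') (hf'unbdd : ¬ BddAbove (Set.range f'))
    (hhpos : ∀ μ, 0 < h μ) (hhmono : Monotone h) (hhunbdd : ¬ BddAbove (Set.range h))
    (c : ℝ) (hc : 0 < c)
    (hequiv : ∀ μ, (1 / c) * f' μ ≤ f μ ∧ f μ ≤ c * f' μ)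
    (m m' : ℕ → ℝ) (hm : IsMerge f h m) (hm' : IsMerge f' h m') :
    ∀ μ, (1 / c) * m' μ ≤ m μ ∧ m μ ≤ c * m' μ :=
  stmt_2_general f f' h hf'pos hhpos c hc hequiv m m' hm hm'
end

section
/- Let f₁(μ) = μ^a and f₂(μ) = μ^b with real exponents 0 < b ≤ a. Then [f₁]*[f₂] = [f₂]; that is, there is a constant c > 0 such that (1/c) μ^b ≤ (f₁*f₂)(μ) ≤ c μ^b for all μ ∈ ℕ. -/
open Finset Function

theorem exists_lt_apply_notMem_of_injective {α : Type*} {g : ℕ → α} (hg : Injective g)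
    {n : ℕ} (t : Finset α) (ht : #t < n) : ∃ i < n, g i ∉ t := by
  classical
  obtain ⟨x, hx, hxt⟩ := exists_mem_notMem_of_card_lt_card (s := t) (t := (range n).image g)
    (by rwa [card_image_of_injective _ hg, card_range])
  obtain ⟨i, hi, rfl⟩ := mem_image.mp hx
  exact ⟨i, mem_range.mp hi, hxt⟩

namespace IsMerge

variable {f h m : ℕ → ℝ}

theorem apply_le_right (hm : IsMerge f h m) (hh : Monotone h) (μ : ℕ) : m μ ≤ h μ := by
  obtain ⟨hmono, e, he⟩ := hm
  obtain ⟨j, hj, hje⟩ := exists_lt_apply_notMem_of_injective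
    (e.injective.comp Sum.inr_injective) (range μ) (n := μ + 1) (by simp)
  calc m μ ≤ m (e (Sum.inr j)) := hmono (by simpa using hje)
    _ = h j := he _
    _ ≤ h μ := hh (by omega)

theorem min_le_apply_two_mul (hm : IsMerge f h m) (hf : Monotone f) (hh : Monotone h)
    (μ : ℕ) : min (f μ) (h μ) ≤ m (2 * μ) := by
  obtain ⟨hmono, e, he⟩ := hm
  obtain ⟨i, hi, hit⟩ := exists_lt_apply_notMem_of_injective e.symm.injective
    ((range μ).disjSum (range μ)) (n := 2 * μ + 1) (by simp [card_disjSum]; omega)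
  have hmi : m i = Sum.elim f h (e.symm i) := by rw [← he, e.apply_symm_apply]
  calc min (f μ) (h μ) ≤ m i := by
        rw [hmi]
        rcases hj : e.symm i with j | j <;> rw [hj] at hit
        · exact (min_le_left _ _).trans (hf (by simpa using hit))
        · exact (min_le_right _ _).trans (hh (by simpa using hit))
    _ ≤ m (2 * μ) := hmono (by omega)

end IsMerge

theorem monotone_natCast_add_one_rpow {b : ℝ} (hb : 0 ≤ b) :
    Monotone fun μ : ℕ => ((μ : ℝ) + 1) ^ b :=
  fun _ _ hij => Real.rpow_le_rpow (by positivity) (by gcongr) hb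

theorem natCast_add_one_rpow_le_two_rpow_mul_half (b : ℝ) (hb : 0 ≤ b) (μ : ℕ) :
    ((μ : ℝ) + 1) ^ b ≤ 2 ^ b * (((μ / 2 : ℕ) : ℝ) + 1) ^ b := by
  have hhalf : ((μ : ℝ) + 1) / 2 ≤ ((μ / 2 : ℕ) : ℝ) + 1 := by
    have : (μ : ℝ) ≤ 2 * ((μ / 2 : ℕ) : ℝ) + 1 := by
      exact_mod_cast (by omega : μ ≤ 2 * (μ / 2) + 1)
    linarith
  calc ((μ : ℝ) + 1) ^ b = 2 ^ b * (((μ : ℝ) + 1) / 2) ^ b := by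
        rw [Real.div_rpow (by positivity) zero_le_two]
        field_simp
    _ ≤ 2 ^ b * (((μ / 2 : ℕ) : ℝ) + 1) ^ b := by gcongr

/-- for `f₁(μ) = μ^a`, `f₂(μ) = μ^b` (0-indexed: `(μ+1)^a` etc.)
with `0 < b ≤ a`, one has `[f₁]*[f₂] = [f₂]`: the merge is comparable to `f₂`
with a two-sided constant. -/
theorem stmt_7 (a b : ℝ) (hb : 0 < b) (hab : b ≤ a) (m : ℕ → ℝ)
    (hm : IsMerge (fun μ : ℕ => ((μ : ℝ) + 1) ^ a) (fun μ : ℕ => ((μ : ℝ) + 1) ^ b) m) :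
    ∃ c > (0:ℝ), ∀ μ : ℕ,
      (1 / c) * ((μ : ℝ) + 1) ^ b ≤ m μ ∧ m μ ≤ c * ((μ : ℝ) + 1) ^ b := by
  have hmono_a := monotone_natCast_add_one_rpow (hb.le.trans hab)
  have hmono_b := monotone_natCast_add_one_rpow hb.le
  have hmin (μ : ℕ) : min (((μ : ℝ) + 1) ^ a) (((μ : ℝ) + 1) ^ b) = ((μ : ℝ) + 1) ^ b :=
    min_eq_right (Real.rpow_le_rpow_of_exponent_le (by simp) hab)
  have h2b : (1 : ℝ) ≤ 2 ^ b := Real.one_le_rpow one_le_two hb.le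
  refine ⟨2 ^ b, by positivity, fun μ => ⟨?_, ?_⟩⟩
  · calc 1 / 2 ^ b * ((μ : ℝ) + 1) ^ b ≤ (((μ / 2 : ℕ) : ℝ) + 1) ^ b := by
          rw [div_mul_eq_mul_div, one_mul, div_le_iff₀' (by positivity)]
          exact natCast_add_one_rpow_le_two_rpow_mul_half b hb.le μ
      _ ≤ m (2 * (μ / 2)) := hmin (μ / 2) ▸ hm.min_le_apply_two_mul hmono_a hmono_b (μ / 2)
      _ ≤ m μ := hm.1 (by omega)
  · calc m μ ≤ ((μ : ℝ) + 1) ^ b := hm.apply_le_right hmono_b μ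
      _ ≤ 2 ^ b * ((μ : ℝ) + 1) ^ b := le_mul_of_one_le_left (by positivity) h2b
end

section
/- Let f₁, f₂ : ℕ → (0,∞) be monotone unbounded. Then the level-wise direct sum scale Hilbert space ℓ^{2,f₁} ⊕ ℓ^{2,f₂} (with k-th level ℓ²_{f₁^k} ⊕ ℓ²_{f₂^k}) is scale isomorphic to ℓ^{2,f₁*f₂}, where f₁*f₂ is the monotone merge of f₁ and f₂. In particular, a product of fractal scale Hilbert spaces is fractal. -/
theorem summable_sum_iff {α β E : Type*} [AddCommGroup E] [UniformSpace E] [IsUniformAddGroup E]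
    [CompleteSpace E] {f : α ⊕ β → E} :
    Summable f ↔ Summable (f ∘ Sum.inl) ∧ Summable (f ∘ Sum.inr) :=
  ⟨fun h => ⟨h.comp_injective Sum.inl_injective, h.comp_injective Sum.inr_injective⟩,
    fun h => h.1.sum f h.2⟩

theorem stmt_13_general (f₁ f₂ : ℕ → ℝ)
    (m : ℕ → ℝ) (hm : IsMerge f₁ f₂ m) :
    ∃ σ : ℕ ⊕ ℕ ≃ ℕ, (∀ i, m (σ i) = Sum.elim f₁ f₂ i) ∧
      ∀ (k : ℕ) (x y : ℕ → ℝ),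
        ((Summable (fun μ => f₁ μ ^ k * x μ ^ 2) ∧
            Summable (fun μ => f₂ μ ^ k * y μ ^ 2)) ↔
          Summable (fun μ => m μ ^ k * (Sum.elim x y (σ.symm μ)) ^ 2)) ∧
        (Summable (fun μ => f₁ μ ^ k * x μ ^ 2) →
          Summable (fun μ => f₂ μ ^ k * y μ ^ 2) →
          (∑' μ, m μ ^ k * (Sum.elim x y (σ.symm μ)) ^ 2) =
            (∑' μ, f₁ μ ^ k * x μ ^ 2) + (∑' μ, f₂ μ ^ k * y μ ^ 2)) := by
  obtain ⟨-, e, he⟩ := hm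
  refine ⟨e, he, fun k x y => ?_⟩
  obtain rfl : m = Sum.elim f₁ f₂ ∘ e.symm := (e.eq_comp_symm _ _).2 (funext he)
  set g : ℕ ⊕ ℕ → ℝ := fun i => Sum.elim f₁ f₂ i ^ k * Sum.elim x y i ^ 2
  have hz : (fun μ => (Sum.elim f₁ f₂ ∘ e.symm) μ ^ k * Sum.elim x y (e.symm μ) ^ 2) =
      g ∘ e.symm := rfl
  have hinl : g ∘ Sum.inl = fun μ => f₁ μ ^ k * x μ ^ 2 := rfl
  have hinr : g ∘ Sum.inr = fun μ => f₂ μ ^ k * y μ ^ 2 := rfl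
  rw [hz, ← hinl, ← hinr, e.symm.summable_iff, summable_sum_iff]
  exact ⟨Iff.rfl, fun h₁ h₂ => (e.symm.tsum_eq g).trans (h₁.tsum_sum h₂)⟩

/-- `ℓ^{2,f₁} ⊕ ℓ^{2,f₂}` is scale isomorphic to `ℓ^{2,f₁*f₂}`:
there is an interleaving bijection `σ : ℕ ⊕ ℕ ≃ ℕ` matching the weights, such
that on every level `k` the pair `(x,y)` lies in `ℓ²_{f₁^k} ⊕ ℓ²_{f₂^k}` iff
the interleaved sequence `z = Sum.elim x y ∘ σ.symm` lies in `ℓ²_{(f₁*f₂)^k}`,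
with equal norms. In particular a product of fractal scale Hilbert spaces is
fractal. -/
theorem stmt_13 (f₁ f₂ : ℕ → ℝ)
    (hf₁pos : ∀ μ, 0 < f₁ μ) (hf₁mono : Monotone f₁) (hf₁unbdd : ¬ BddAbove (Set.range f₁))
    (hf₂pos : ∀ μ, 0 < f₂ μ) (hf₂mono : Monotone f₂) (hf₂unbdd : ¬ BddAbove (Set.range f₂))
    (m : ℕ → ℝ) (hm : IsMerge f₁ f₂ m) :
    ∃ σ : ℕ ⊕ ℕ ≃ ℕ, (∀ i, m (σ i) = Sum.elim f₁ f₂ i) ∧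
      ∀ (k : ℕ) (x y : ℕ → ℝ),
        ((Summable (fun μ => f₁ μ ^ k * x μ ^ 2) ∧
            Summable (fun μ => f₂ μ ^ k * y μ ^ 2)) ↔
          Summable (fun μ => m μ ^ k * (Sum.elim x y (σ.symm μ)) ^ 2)) ∧
        (Summable (fun μ => f₁ μ ^ k * x μ ^ 2) →
          Summable (fun μ => f₂ μ ^ k * y μ ^ 2) →
          (∑' μ, m μ ^ k * (Sum.elim x y (σ.symm μ)) ^ 2) =
            (∑' μ, f₁ μ ^ k * x μ ^ 2) + (∑' μ, f₂ μ ^ k * y μ ^ 2)) :=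
  stmt_13_general f₁ f₂ m hm
end

section
/- Let a ≥ b > 0 be real exponents and let f₁(μ) = μ^a, f₂(μ) = μ^b. Then ℓ^{2,f₁} ⊕ ℓ^{2,f₂} is scale isomorphic to ℓ^{2,f₂}; i.e., the direct sum of the weighted-sequence scale Hilbert spaces with polynomial weights μ^a and μ^b (a ≥ b) is scale isomorphic to the one with the smaller exponent. -/
/-!
Put `r = a / b ≥ 1`. Place `x` at the odd positions `s μ = 2 (⌊(μ + 1) ^ r⌋ + μ) + 1`, whose
weights `(s μ + 1) ^ b` are comparable to `(μ + 1) ^ (r b) = (μ + 1) ^ a`, and `y`, in increasing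
order, at the remaining positions. These contain every even number, so the `μ`-th of them lies
between `μ` and `2 μ` and its weight is comparable to `(μ + 1) ^ b`. On level `k` all weights are
therefore matched up to the factor `(4 ^ b) ^ k`.
-/

open Function Set

section SumEquiv

variable {s : ℕ → ℕ}

lemma two_mul_mem_compl_range (hodd : ∀ μ, Odd (s μ)) (i : ℕ) : 2 * i ∈ (range s)ᶜ := by
  rintro ⟨μ, hμ⟩
  exact Nat.not_even_iff_odd.2 (hodd μ) (hμ ▸ even_two_mul i)

lemma infinite_compl_range_of_odd (hodd : ∀ μ, Odd (s μ)) : (range s)ᶜ.Infinite :=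
  infinite_of_injective_forall_mem (mul_right_injective₀ two_ne_zero)
    (two_mul_mem_compl_range hodd)

open Classical in
noncomputable def sumEquivOfOdd (hs : Injective s) (hodd : ∀ μ, Odd (s μ)) : ℕ ⊕ ℕ ≃ ℕ :=
  have := (infinite_compl_range_of_odd hodd).to_subtype
  ((Equiv.ofInjective s hs).sumCongr (Nat.Subtype.orderIsoOfNat (range s)ᶜ).toEquiv).trans
    (Equiv.Set.sumCompl (range s))

variable (hs : Injective s) (hodd : ∀ μ, Odd (s μ))

lemma sumEquivOfOdd_inr (μ : ℕ) :
    sumEquivOfOdd hs hodd (.inr μ) = Nat.nth (· ∈ (range s)ᶜ) μ :=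
  (Nat.nth_apply_eq_orderIsoOfNat (infinite_compl_range_of_odd hodd) μ).symm

lemma le_sumEquivOfOdd_inr (μ : ℕ) : μ ≤ sumEquivOfOdd hs hodd (.inr μ) := by
  rw [sumEquivOfOdd_inr]
  exact (Nat.nth_strictMono (infinite_compl_range_of_odd hodd)).id_le μ

lemma sumEquivOfOdd_inr_le (μ : ℕ) : sumEquivOfOdd hs hodd (.inr μ) ≤ 2 * μ := by
  rw [sumEquivOfOdd_inr]
  exact Nat.nth_le_of_strictMonoOn_of_mapsTo (2 * ·)
    (fun i _ => two_mul_mem_compl_range hodd i)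
    ((strictMono_mul_left_of_pos (two_pos (α := ℕ))).strictMonoOn _)

end SumEquiv

/-- An odd number comparable to `(μ + 1) ^ r`; the summand `μ` makes it strictly increasing. -/
noncomputable def powSlot (r : ℝ) (μ : ℕ) : ℕ := 2 * (⌊((μ : ℝ) + 1) ^ r⌋₊ + μ) + 1

lemma powSlot_odd (r : ℝ) (μ : ℕ) : Odd (powSlot r μ) := odd_two_mul_add_one _

lemma powSlot_strictMono {r : ℝ} (hr : 0 ≤ r) : StrictMono (powSlot r) := by
  intro m n hmn
  have : ⌊((m : ℝ) + 1) ^ r⌋₊ ≤ ⌊((n : ℝ) + 1) ^ r⌋₊ :=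
    Nat.floor_le_floor (by gcongr)
  unfold powSlot
  omega

lemma rpow_le_powSlot_add_one (r : ℝ) (μ : ℕ) : ((μ : ℝ) + 1) ^ r ≤ powSlot r μ + 1 := by
  have hA : 0 ≤ ((μ : ℝ) + 1) ^ r := by positivity
  have := Nat.lt_floor_add_one (((μ : ℝ) + 1) ^ r)
  unfold powSlot
  push_cast
  linarith [(Nat.cast_nonneg μ : (0 : ℝ) ≤ μ)]

lemma powSlot_add_one_le {r : ℝ} (hr : 1 ≤ r) (μ : ℕ) :
    (powSlot r μ : ℝ) + 1 ≤ 4 * ((μ : ℝ) + 1) ^ r := by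
  have hfloor := Nat.floor_le (by positivity : (0 : ℝ) ≤ ((μ : ℝ) + 1) ^ r)
  have hbase : (μ : ℝ) + 1 ≤ ((μ : ℝ) + 1) ^ r := Real.self_le_rpow_of_one_le (by simp) hr
  unfold powSlot
  push_cast
  linarith

lemma exists_sumEquiv_rpow_bounds {r : ℝ} (hr : 1 ≤ r) : ∃ e : ℕ ⊕ ℕ ≃ ℕ, ∀ μ : ℕ,
    (((μ : ℝ) + 1) ^ r ≤ e (.inl μ) + 1 ∧ (e (.inl μ) : ℝ) + 1 ≤ 4 * ((μ : ℝ) + 1) ^ r) ∧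
    ((μ : ℝ) + 1 ≤ e (.inr μ) + 1 ∧ (e (.inr μ) : ℝ) + 1 ≤ 4 * ((μ : ℝ) + 1)) := by
  have hs := (powSlot_strictMono (zero_le_one.trans hr)).injective
  refine ⟨sumEquivOfOdd hs (powSlot_odd r), fun μ => ⟨?_, ?_⟩⟩
  · exact ⟨rpow_le_powSlot_add_one r μ, powSlot_add_one_le hr μ⟩
  · have hlow : (μ : ℝ) ≤ sumEquivOfOdd hs (powSlot_odd r) (.inr μ) := by
      exact_mod_cast le_sumEquivOfOdd_inr hs (powSlot_odd r) μ
    have hup : (sumEquivOfOdd hs (powSlot_odd r) (.inr μ) : ℝ) ≤ 2 * μ := by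
      exact_mod_cast sumEquivOfOdd_inr_le hs (powSlot_odd r) μ
    constructor <;> linarith

lemma rpow_pow_bounds_of_le_of_le_mul {p q C b : ℝ} (hp : 0 ≤ p) (hC : 0 ≤ C) (hb : 0 ≤ b)
    (hpq : p ≤ q) (hqp : q ≤ C * p) (k : ℕ) :
    (p ^ b) ^ k ≤ (q ^ b) ^ k ∧ (q ^ b) ^ k ≤ (C ^ b) ^ k * (p ^ b) ^ k := by
  have hq : 0 ≤ q := hp.trans hpq
  refine ⟨by gcongr, ?_⟩
  calc (q ^ b) ^ k ≤ ((C * p) ^ b) ^ k := by gcongr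
    _ = (C ^ b) ^ k * (p ^ b) ^ k := by rw [Real.mul_rpow hC hp, mul_pow]

lemma summable_iff_of_le_of_le_mul {ι : Type*} {u v : ι → ℝ} {c : ℝ} (hu : ∀ i, 0 ≤ u i)
    (hlow : ∀ i, u i ≤ v i) (hup : ∀ i, v i ≤ c * u i) : Summable v ↔ Summable u :=
  ⟨fun h => h.of_nonneg_of_le hu hlow,
    fun h => (h.mul_left c).of_nonneg_of_le (fun i => (hu i).trans (hlow i)) hup⟩

lemma summable_sumElim_iff {α β E : Type*} [NormedAddCommGroup E] [CompleteSpace E]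
    {f : α → E} {g : β → E} : Summable (Sum.elim f g) ↔ Summable f ∧ Summable g :=
  ⟨fun h => ⟨h.comp_injective Sum.inl_injective, h.comp_injective Sum.inr_injective⟩,
    fun h => Summable.sum _ h.1 h.2⟩

lemma summable_iff_and_tsum_bounds_of_sumEquiv {α β γ : Type*} (e : α ⊕ β ≃ γ)
    {f : α → ℝ} {g : β → ℝ} {h : γ → ℝ} {c : ℝ} (hf : ∀ i, 0 ≤ f i) (hg : ∀ j, 0 ≤ g j)
    (hc : 1 ≤ c) (hfh : ∀ i, f i ≤ h (e (.inl i)) ∧ h (e (.inl i)) ≤ c * f i)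
    (hgh : ∀ j, g j ≤ h (e (.inr j)) ∧ h (e (.inr j)) ≤ c * g j) :
    ((Summable f ∧ Summable g) ↔ Summable h) ∧
      (Summable f → Summable g →
        (1 / c) * ((∑' i, f i) + ∑' j, g j) ≤ ∑' n, h n ∧
          ∑' n, h n ≤ c * ((∑' i, f i) + ∑' j, g j)) := by
  set u : α ⊕ β → ℝ := Sum.elim f g
  have hu : ∀ i, 0 ≤ u i := by rintro (i | j) <;> simp [u, hf, hg]
  have hlow : ∀ i, u i ≤ h (e i) := by rintro (i | j) <;> simp [u, hfh, hgh]
  have hup : ∀ i, h (e i) ≤ c * u i := by rintro (i | j) <;> simp [u, hfh, hgh]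
  have hsum : Summable h ↔ Summable u :=
    e.summable_iff.symm.trans (summable_iff_of_le_of_le_mul hu hlow hup)
  refine ⟨summable_sumElim_iff.symm.trans hsum.symm, fun hfs hgs => ?_⟩
  have hus : Summable u := summable_sumElim_iff.2 ⟨hfs, hgs⟩
  have htsum_u : ∑' i, u i = (∑' i, f i) + ∑' j, g j := Summable.tsum_sum hfs hgs
  have htsum_h : ∑' n, h n = ∑' i, h (e i) := (e.tsum_eq h).symm
  have hhs : Summable (h ∘ e) := e.summable_iff.2 (hsum.2 hus)
  have h_ge : ∑' i, u i ≤ ∑' n, h n := htsum_h ▸ hus.tsum_le_tsum hlow hhs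
  have h_le : ∑' n, h n ≤ c * ∑' i, u i := by
    rw [htsum_h, ← tsum_mul_left]
    exact hhs.tsum_le_tsum hup (hus.mul_left c)
  have hc_inv : (1 / c) * ∑' i, u i ≤ ∑' i, u i :=
    mul_le_of_le_one_left (tsum_nonneg hu) (div_le_one_of_le₀ hc (by linarith))
  rw [← htsum_u]
  exact ⟨hc_inv.trans h_ge, h_le⟩

def Equiv.prodArrowLinearEquiv {α β γ : Type*} (R : Type*) [Semiring R] (e : α ⊕ β ≃ γ) :
    ((α → R) × (β → R)) ≃ₗ[R] (γ → R) :=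
  (LinearEquiv.sumArrowLequivProdArrow α β R R).symm.trans (LinearEquiv.funCongrLeft R R e.symm)

section Weighted

variable {α β γ : Type*} (e : α ⊕ β ≃ γ) (x : α → ℝ) (y : β → ℝ)

@[simp]
lemma Equiv.prodArrowLinearEquiv_apply_inl (i : α) :
    e.prodArrowLinearEquiv ℝ (x, y) (e (.inl i)) = x i := by
  simp [Equiv.prodArrowLinearEquiv, LinearEquiv.funCongrLeft_apply]

@[simp]
lemma Equiv.prodArrowLinearEquiv_apply_inr (j : β) :
    e.prodArrowLinearEquiv ℝ (x, y) (e (.inr j)) = y j := by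
  simp [Equiv.prodArrowLinearEquiv, LinearEquiv.funCongrLeft_apply]

lemma weighted_summable_iff_and_tsum_bounds {u : α → ℝ} {v : β → ℝ} {w : γ → ℝ} {c : ℝ}
    (hu : ∀ i, 0 ≤ u i) (hv : ∀ j, 0 ≤ v j) (hc : 1 ≤ c)
    (hwu : ∀ i, u i ≤ w (e (.inl i)) ∧ w (e (.inl i)) ≤ c * u i)
    (hwv : ∀ j, v j ≤ w (e (.inr j)) ∧ w (e (.inr j)) ≤ c * v j) :
    ((Summable (fun i => u i * x i ^ 2) ∧ Summable (fun j => v j * y j ^ 2)) ↔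
        Summable (fun n => w n * e.prodArrowLinearEquiv ℝ (x, y) n ^ 2)) ∧
      (Summable (fun i => u i * x i ^ 2) → Summable (fun j => v j * y j ^ 2) →
        (1 / c) * ((∑' i, u i * x i ^ 2) + ∑' j, v j * y j ^ 2) ≤
            ∑' n, w n * e.prodArrowLinearEquiv ℝ (x, y) n ^ 2 ∧
          ∑' n, w n * e.prodArrowLinearEquiv ℝ (x, y) n ^ 2 ≤
            c * ((∑' i, u i * x i ^ 2) + ∑' j, v j * y j ^ 2)) := by
  refine summable_iff_and_tsum_bounds_of_sumEquiv e (fun i => by have := hu i; positivity)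
    (fun j => by have := hv j; positivity) hc (fun i => ?_) (fun j => ?_)
  · simp only [Equiv.prodArrowLinearEquiv_apply_inl, ← mul_assoc]
    exact ⟨by gcongr; exact (hwu i).1, by gcongr; exact (hwu i).2⟩
  · simp only [Equiv.prodArrowLinearEquiv_apply_inr, ← mul_assoc]
    exact ⟨by gcongr; exact (hwv j).1, by gcongr; exact (hwv j).2⟩

end Weighted

/-- sequence-space form of Theorem B: for `a ≥ b > 0` and the
polynomial weights `f₁(μ) = μ^a`, `f₂(μ) = μ^b` (0-indexed as `(μ+1)^a` etc.),
the direct sum `ℓ^{2,f₁} ⊕ ℓ^{2,f₂}` is scale isomorphic to `ℓ^{2,f₂}`: there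
is a linear bijection of sequence pairs to sequences which, on every level
`k`, identifies the summability conditions and is bounded with bounded
inverse in the weighted norms. -/
theorem stmt_14 (a b : ℝ) (hb : 0 < b) (hab : b ≤ a) :
    ∃ Φ : ((ℕ → ℝ) × (ℕ → ℝ)) →ₗ[ℝ] (ℕ → ℝ), Function.Bijective Φ ∧
      ∀ k : ℕ, ∃ c > (0:ℝ), ∀ x y : ℕ → ℝ,
        ((Summable (fun μ : ℕ => (((μ : ℝ) + 1) ^ a) ^ k * x μ ^ 2) ∧
            Summable (fun μ : ℕ => (((μ : ℝ) + 1) ^ b) ^ k * y μ ^ 2)) ↔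
          Summable (fun μ : ℕ => (((μ : ℝ) + 1) ^ b) ^ k * (Φ (x, y)) μ ^ 2)) ∧
        (Summable (fun μ : ℕ => (((μ : ℝ) + 1) ^ a) ^ k * x μ ^ 2) →
          Summable (fun μ : ℕ => (((μ : ℝ) + 1) ^ b) ^ k * y μ ^ 2) →
          (1 / c) * ((∑' μ : ℕ, (((μ : ℝ) + 1) ^ a) ^ k * x μ ^ 2) +
              (∑' μ : ℕ, (((μ : ℝ) + 1) ^ b) ^ k * y μ ^ 2)) ≤
            (∑' μ : ℕ, (((μ : ℝ) + 1) ^ b) ^ k * (Φ (x, y)) μ ^ 2) ∧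
          (∑' μ : ℕ, (((μ : ℝ) + 1) ^ b) ^ k * (Φ (x, y)) μ ^ 2) ≤
            c * ((∑' μ : ℕ, (((μ : ℝ) + 1) ^ a) ^ k * x μ ^ 2) +
              (∑' μ : ℕ, (((μ : ℝ) + 1) ^ b) ^ k * y μ ^ 2))) := by
  obtain ⟨e, he⟩ := exists_sumEquiv_rpow_bounds ((one_le_div hb).2 hab)
  let Φ := e.prodArrowLinearEquiv ℝ
  refine ⟨Φ.toLinearMap, Φ.bijective, fun k => ?_⟩
  have hc : 1 ≤ ((4 : ℝ) ^ b) ^ k := one_le_pow₀ (Real.one_le_rpow (by norm_num) hb.le)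
  refine ⟨_, one_pos.trans_le hc, fun x y => weighted_summable_iff_and_tsum_bounds e x y
    (fun _ => by positivity) (fun _ => by positivity) hc (fun μ => ?_) (fun μ => ?_)⟩
  · have h := rpow_pow_bounds_of_le_of_le_mul (by positivity) (by norm_num) hb.le
      (he μ).1.1 (he μ).1.2 k
    rwa [← Real.rpow_mul (by positivity), div_mul_cancel₀ a hb.ne'] at h
  · exact rpow_pow_bounds_of_le_of_le_mul (by positivity) (by norm_num) hb.le
      (he μ).2.1 (he μ).2.2 k
end

section
/- Let (λ_μ) be a nondecreasing unbounded sequence with λ_μ ≥ 1, let (φ_μ) be orthonormal in a Hilbert space, and for k ∈ ℕ₀ let H_k be the completion of finite linear combinations of the φ_μ with respect to ⟨u,v⟩_k where φ_μ has ⟨φ_μ,φ_μ⟩_k = ∑_{j=0}^{k} λ_μ^{j}. Then the map Φ sending ψ to the sequence ( ⟨ψ,φ_μ⟩_{k₀} / (∑_{j=0}^{k₀} λ_μ^j)^{1/2} )_μ is a scale isomorphism from the scale Hilbert space (H_{k+k₀})_{k∈ℕ₀} to ℓ^{2,f} with f(μ) = λ_μ, for any fixed k₀ ∈ ℕ. 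-/
/-!
With `w_n(x) = ∑_{j ≤ n} x^j`, the `k`-th level of the scale pulls back under `Φ` to the weight
`x^k w_{k₀}(x) = ∑_{k ≤ j ≤ k+k₀} x^j`, a sub-sum of `w_{k+k₀}(x)`. Conversely, for `x ≥ 1` every
term of `w_{k+k₀}(x)` is at most `x^{k+k₀} ≤ x^k w_{k₀}(x)`, so `w_{k+k₀} ≤ (k+k₀+1) x^k w_{k₀}`.
Two pointwise comparable weights give the same weighted `ℓ²` space with comparable norms.
-/

open Finset

theorem pow_mul_geom_sum_le_geom_sum_add {x : ℝ} (hx : 0 ≤ x) (k m : ℕ) :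
    x ^ k * ∑ j ∈ range (m + 1), x ^ j ≤ ∑ j ∈ range (k + m + 1), x ^ j := by
  rw [add_assoc, sum_range_add (fun j => x ^ j) k (m + 1), mul_sum]
  simp only [pow_add]
  exact le_add_of_nonneg_left (sum_nonneg fun j _ => pow_nonneg hx j)

theorem geom_sum_le_card_mul_pow {x : ℝ} (hx : 1 ≤ x) (n : ℕ) :
    ∑ j ∈ range (n + 1), x ^ j ≤ (n + 1) * x ^ n := by
  calc ∑ j ∈ range (n + 1), x ^ j ≤ #(range (n + 1)) • x ^ n :=
        sum_le_card_nsmul _ _ _ fun j hj => pow_le_pow_right₀ hx (mem_range_succ_iff.mp hj)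
    _ = (n + 1) * x ^ n := by rw [card_range, nsmul_eq_mul]; push_cast; ring

theorem pow_le_geom_sum {x : ℝ} (hx : 0 ≤ x) (n : ℕ) : x ^ n ≤ ∑ j ∈ range (n + 1), x ^ j :=
  single_le_sum (f := fun j => x ^ j) (fun j _ => pow_nonneg hx j) (self_mem_range_succ n)

theorem geom_sum_add_le_mul_pow_mul_geom_sum {x : ℝ} (hx : 1 ≤ x) (k m : ℕ) :
    ∑ j ∈ range (k + m + 1), x ^ j ≤ (k + m + 1 : ℕ) * (x ^ k * ∑ j ∈ range (m + 1), x ^ j) := by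
  have hx₀ : 0 ≤ x := zero_le_one.trans hx
  calc ∑ j ∈ range (k + m + 1), x ^ j ≤ ((k + m : ℕ) + 1) * x ^ (k + m) :=
        geom_sum_le_card_mul_pow hx (k + m)
    _ = (k + m + 1 : ℕ) * (x ^ k * x ^ m) := by push_cast; ring
    _ ≤ (k + m + 1 : ℕ) * (x ^ k * ∑ j ∈ range (m + 1), x ^ j) := by
        gcongr
        exact pow_le_geom_sum hx₀ m

theorem tsum_le_mul_tsum {ι : Type*} {a b : ι → ℝ} {C : ℝ} (ha : Summable a) (hb : Summable b)
    (hab : ∀ i, a i ≤ C * b i) : ∑' i, a i ≤ C * ∑' i, b i :=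
  (ha.tsum_le_tsum hab (hb.mul_left C)).trans_eq tsum_mul_left

theorem summable_iff_and_tsum_comparable {ι : Type*} {a b : ι → ℝ} {C : ℝ} (hC : 1 ≤ C)
    (hb : ∀ i, 0 ≤ b i) (hba : ∀ i, b i ≤ a i) (hab : ∀ i, a i ≤ C * b i) :
    (Summable a ↔ Summable b) ∧
      (Summable a → 1 / C * ∑' i, a i ≤ ∑' i, b i ∧ ∑' i, b i ≤ C * ∑' i, a i) := by
  have hC₀ : 0 < C := zero_lt_one.trans_le hC
  have ha : ∀ i, 0 ≤ a i := fun i => (hb i).trans (hba i)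
  have hiff : Summable a ↔ Summable b :=
    ⟨.of_nonneg_of_le hb hba, fun h => .of_nonneg_of_le ha hab (h.mul_left C)⟩
  refine ⟨hiff, fun hsa => ⟨?_, ?_⟩⟩
  · rw [one_div, inv_mul_le_iff₀ hC₀]
    exact tsum_le_mul_tsum hsa (hiff.mp hsa) hab
  · calc ∑' i, b i ≤ ∑' i, a i := (hiff.mp hsa).tsum_le_tsum hba hsa
      _ ≤ C * ∑' i, a i := le_mul_of_one_le_left (tsum_nonneg ha) hC

theorem stmt_19_general (lam : ℕ → ℝ) (h1 : ∀ μ, 1 ≤ lam μ) (k₀ : ℕ) :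
    ∀ k : ℕ, ∃ c > (0:ℝ), ∀ cseq : ℕ → ℝ,
      ((Summable (fun μ => (∑ j ∈ Finset.range (k + k₀ + 1), lam μ ^ j) * cseq μ ^ 2)) ↔
        Summable (fun μ => lam μ ^ k *
          (Real.sqrt (∑ j ∈ Finset.range (k₀ + 1), lam μ ^ j) * cseq μ) ^ 2)) ∧
      (Summable (fun μ => (∑ j ∈ Finset.range (k + k₀ + 1), lam μ ^ j) * cseq μ ^ 2) →
        (1 / c) * (∑' μ, (∑ j ∈ Finset.range (k + k₀ + 1), lam μ ^ j) * cseq μ ^ 2) ≤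
            (∑' μ, lam μ ^ k *
              (Real.sqrt (∑ j ∈ Finset.range (k₀ + 1), lam μ ^ j) * cseq μ) ^ 2) ∧
        (∑' μ, lam μ ^ k *
            (Real.sqrt (∑ j ∈ Finset.range (k₀ + 1), lam μ ^ j) * cseq μ) ^ 2) ≤
          c * (∑' μ, (∑ j ∈ Finset.range (k + k₀ + 1), lam μ ^ j) * cseq μ ^ 2)) := by
  intro k
  refine ⟨(k + k₀ + 1 : ℕ), by positivity, fun cseq => ?_⟩
  have hlam₀ : ∀ μ, 0 ≤ lam μ := fun μ => zero_le_one.trans (h1 μ)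
  have hw₀ : ∀ μ, 0 ≤ ∑ j ∈ range (k₀ + 1), lam μ ^ j := fun μ =>
    sum_nonneg fun j _ => pow_nonneg (hlam₀ μ) j
  have hpulled : ∀ μ, lam μ ^ k * (Real.sqrt (∑ j ∈ range (k₀ + 1), lam μ ^ j) * cseq μ) ^ 2 =
      (lam μ ^ k * ∑ j ∈ range (k₀ + 1), lam μ ^ j) * cseq μ ^ 2 := fun μ => by
    rw [mul_pow, Real.sq_sqrt (hw₀ μ), mul_assoc]
  simp only [hpulled]
  refine summable_iff_and_tsum_comparable (by norm_cast; omega)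
    (fun μ => mul_nonneg (mul_nonneg (pow_nonneg (hlam₀ μ) k) (hw₀ μ)) (sq_nonneg _))
    (fun μ => ?_) (fun μ => ?_)
  · exact mul_le_mul_of_nonneg_right (pow_mul_geom_sum_le_geom_sum_add (hlam₀ μ) k k₀)
      (sq_nonneg _)
  · rw [← mul_assoc]
    exact mul_le_mul_of_nonneg_right (geom_sum_add_le_mul_pow_mul_geom_sum (h1 μ) k k₀)
      (sq_nonneg _)

/-- coefficient form of Theorem 3.1: let `(λ_μ)` be
nondecreasing, `≥ 1` and unbounded. The abstract space `H_k` (completion of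
the span of an orthonormal-in-`H₀` family `(φ_μ)` for the inner product in
which `⟨φ_μ,φ_μ⟩_k = ∑_{j=0}^k λ_μ^j`) is isometrically the weighted sequence
space with weight `w_k(μ) = ∑_{j=0}^k λ_μ^j` acting on coefficient sequences
`c`. The map `Φ` sending `ψ` (with coefficients `c`) to
`(⟨ψ,φ_μ⟩_{k₀} / w_{k₀}(μ)^{1/2})_μ = (w_{k₀}(μ)^{1/2} c_μ)_μ` is a scale
isomorphism from `(H_{k+k₀})_{k}` to `ℓ^{2,f}` with `f(μ) = λ_μ`: on every
level `k` the summability conditions for `ψ ∈ H_{k+k₀}` and `Φψ ∈ ℓ²_{λ^k}`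
agree, and the norms are two-sidedly comparable. -/
theorem stmt_19 (lam : ℕ → ℝ) (hmono : Monotone lam) (h1 : ∀ μ, 1 ≤ lam μ)
    (hunbdd : ¬ BddAbove (Set.range lam)) (k₀ : ℕ) (hk₀ : 1 ≤ k₀) :
    ∀ k : ℕ, ∃ c > (0:ℝ), ∀ cseq : ℕ → ℝ,
      ((Summable (fun μ => (∑ j ∈ Finset.range (k + k₀ + 1), lam μ ^ j) * cseq μ ^ 2)) ↔
        Summable (fun μ => lam μ ^ k *
          (Real.sqrt (∑ j ∈ Finset.range (k₀ + 1), lam μ ^ j) * cseq μ) ^ 2)) ∧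
      (Summable (fun μ => (∑ j ∈ Finset.range (k + k₀ + 1), lam μ ^ j) * cseq μ ^ 2) →
        (1 / c) * (∑' μ, (∑ j ∈ Finset.range (k + k₀ + 1), lam μ ^ j) * cseq μ ^ 2) ≤
            (∑' μ, lam μ ^ k *
              (Real.sqrt (∑ j ∈ Finset.range (k₀ + 1), lam μ ^ j) * cseq μ) ^ 2) ∧
        (∑' μ, lam μ ^ k *
            (Real.sqrt (∑ j ∈ Finset.range (k₀ + 1), lam μ ^ j) * cseq μ) ^ 2) ≤
          c * (∑' μ, (∑ j ∈ Finset.range (k + k₀ + 1), lam μ ^ j) * cseq μ ^ 2)) :=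
  stmt_19_general lam h1 k₀
end
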